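/- Let A(x) := Σ_{n≥0} (−1)^n · p^{n²}·y^{2n}/(p;p)_n · x^n ∈ ℚ(p,y)[[x]] and B(x) := A(x) − p·x·y·A(p·x). For a Dyck word μ of size m, let ret(μ) be the number of nonempty prefixes of μ with equal numbers of U's and D's (the number of prime Dyck factors of μ), and let Area(μ) := Σ_{i=1}^{m}(i − 1 − d_i(μ)) with d_i(μ) the number of D's preceding the i-th U. Then B(x) · Σ_{n≥0} (p·x·y)^n · ( Σ_{μ Dyck word of size n+1} p^{ret(μ) + Area(μ) − (n+1)} · y^{(n+1) − ret(μ)} ) = A(p·x); that is, A(p·x)/B(x) equals the generating function Σ_{n≥0} (pxy)^n Σ_{μ ∈ D_{n+1}} p^{D(μ)} y^{n+1−ret(μ)} with D(μ) = ret(μ) + Area(μ) − (n+1). -/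

import Mathlib

attribute [local instance] Classical.propDecidable

/-- The field `ℚ(p,y)`, realized as rational functions in `y` over `ℚ(p)`. -/
abbrev K2 : Type := RatFunc (RatFunc ℚ)

/-- The variable `p` of `ℚ(p,y)`. -/
noncomputable def pv : K2 := RatFunc.C RatFunc.X

/-- The variable `y` of `ℚ(p,y)`. -/
noncomputable def yv : K2 := RatFunc.X

/-- `A(x) = Σ_{n≥0} (-1)^n p^{n²} y^{2n} / (p;p)_n · x^n ∈ ℚ(p,y)[[x]]`. -/
noncomputable def Aser : PowerSeries K2 :=
  PowerSeries.mk fun n =>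
    (-1 : K2) ^ n * pv ^ (n ^ 2) * yv ^ (2 * n) /
      ∏ i ∈ Finset.range n, (1 - pv ^ (i + 1))

/-- `B(x) = A(x) - p·x·y·A(p·x)`. -/
noncomputable def Bser : PowerSeries K2 :=
  Aser - PowerSeries.C (R := K2) (pv * yv) * PowerSeries.X * PowerSeries.rescale pv Aser

/-- A word `w` (with `true = U`, `false = D`) satisfies the ballot condition: every
prefix contains at least as many `U`'s as `D`'s. -/
def prefixCond (L : ℕ) (w : Fin L → Bool) : Prop :=
  ∀ m ∈ Finset.range (L + 1),
    (Finset.univ.filter (fun j : Fin L => (j : ℕ) < m ∧ w j = false)).card ≤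
      (Finset.univ.filter (fun j : Fin L => (j : ℕ) < m ∧ w j = true)).card

/-- A Dyck word of size `m`: a word of length `2m` with exactly `m` `U`'s such that
every prefix has at least as many `U`'s as `D`'s. -/
def isDyck (m : ℕ) (w : Fin (2 * m) → Bool) : Prop :=
  (Finset.univ.filter (fun j => w j = true)).card = m ∧ prefixCond (2 * m) w

/-- `d_i(w)`, the number of `D`'s preceding the `i`-th `U` in `w` (1-indexed `i`). -/
def dCount (m : ℕ) (w : Fin (2 * m) → Bool) (i : ℕ) : ℕ :=
  (Finset.univ.filter (fun j : Fin (2 * m) => w j = false ∧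
    (Finset.univ.filter
      (fun j' : Fin (2 * m) => (j' : ℕ) < (j : ℕ) ∧ w j' = true)).card < i)).card

/-- `Area(w) = Σ_{i=1}^{m} (i - 1 - d_i(w))`. -/
def area (m : ℕ) (w : Fin (2 * m) → Bool) : ℕ :=
  ∑ i ∈ Finset.Icc 1 m, (i - 1 - dCount m w i)

/-- `ret(w)`, the number of nonempty prefixes of `w` with equal numbers of `U`'s and
`D`'s (the number of prime Dyck factors of `w`). -/
def retCount (m : ℕ) (w : Fin (2 * m) → Bool) : ℕ :=
  ((Finset.Icc 1 (2 * m)).filter (fun l =>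
    (Finset.univ.filter (fun j : Fin (2 * m) => (j : ℕ) < l ∧ w j = true)).card =
      (Finset.univ.filter (fun j : Fin (2 * m) => (j : ℕ) < l ∧ w j = false)).card)).card

/-- `Σ_{μ ∈ D_{n+1}} p^{ret(μ) + Area(μ) - (n+1)} · y^{(n+1) - ret(μ)}`
(integer exponents). -/
noncomputable def Dcoeff (n : ℕ) : K2 :=
  ∑ w ∈ Finset.univ.filter (fun w : Fin (2 * (n + 1)) → Bool => isDyck (n + 1) w),
    pv ^ ((retCount (n + 1) w + area (n + 1) w : ℤ) - (n + 1)) *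
      yv ^ (((n : ℤ) + 1) - retCount (n + 1) w)

/-!
Split a nonempty Dyck word at its first return, `μ = U μ₁ D μ₂`. Then
`area μ = area μ₁ + |μ₁| + area μ₂` and `ret μ = ret μ₂ + 1`, so the series
`G(x) = Σ_μ p^{area μ} (p y² x)^{|μ|}` and `C(x) = Σ_μ p^{area μ} (p/y)^{ret μ} (y² x)^{|μ|}`
satisfy `C = 1 + p y x · G · C`. The series `Φ` of the statement satisfies `C = 1 + p y x · Φ`,
hence `Φ = G · C`. On the other side, `A(x) - A(p x) = -p y² x A(p² x)`; combined with the
functional equation `G = 1 + p y² x · G(p x) · G` this gives `A(x) G(x) = A(p x)`, by induction on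
the coefficients, simultaneously for all rescalings `x ↦ c x`. Finally
`B Φ = (A G - p x y A(p x) G) C = A(p x) (1 - p x y G) C = A(p x)`.
-/

open Finset DyckStep

/-! ### Lists of Dyck steps and `Fin`-indexed words -/

lemma List.count_take_eq_card_filter {α : Type*} [DecidableEq α] (l : List α) (x : α)
    (n : ℕ) : (l.take n).count x = #{j ∈ Finset.range n | l[j]? = some x} := by
  induction n with
  | zero => simp
  | succ n ih =>
    rw [List.take_add_one, List.count_append, ih, Finset.range_add_one, filter_insert]
    rcases h : l[n]? with _ | y
    · simp
    · by_cases hy : y = x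
      · subst hy
        rw [if_pos rfl, card_insert_of_notMem (by simp)]
        simp
      · simp [hy]

lemma List.count_take_succ {α : Type*} [DecidableEq α] (l : List α) (x : α) (j : ℕ) :
    (l.take (j + 1)).count x = (l.take j).count x + if l[j]? = some x then 1 else 0 := by
  rw [List.take_add_one, List.count_append]
  rcases l[j]? with _ | y
  · simp
  · by_cases h : y = x <;> simp [h]

lemma List.count_take_mono {α : Type*} [BEq α] (l : List α) (x : α) {m n : ℕ} (h : m ≤ n) :
    (l.take m).count x ≤ (l.take n).count x :=
  (List.take_prefix_take_left h).count_le x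

lemma List.count_U_add_count_D (l : List DyckStep) : l.count U + l.count D = l.length := by
  induction l with
  | nil => rfl
  | cons s l ih => cases s <;> simp <;> omega

def DyckStep.ofBool (b : Bool) : DyckStep := if b then U else D

@[simp] lemma DyckStep.ofBool_true : ofBool true = U := rfl
@[simp] lemma DyckStep.ofBool_false : ofBool false = D := rfl

def stepsOfFn {L : ℕ} (w : Fin L → Bool) : List DyckStep := List.ofFn (DyckStep.ofBool ∘ w)

def fnOfSteps (L : ℕ) (l : List DyckStep) : Fin L → Bool := fun j => l[(j : ℕ)]? = some U

lemma fnOfSteps_stepsOfFn {L : ℕ} (w : Fin L → Bool) : fnOfSteps L (stepsOfFn w) = w := by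
  funext j
  cases h : w j <;> simp [fnOfSteps, stepsOfFn, DyckStep.ofBool, h]

lemma stepsOfFn_fnOfSteps {L : ℕ} {l : List DyckStep} (hl : l.length = L) :
    stepsOfFn (fnOfSteps L l) = l := by
  subst hl
  apply List.ext_getElem (by simp [stepsOfFn])
  intro j h hj
  rcases (l[j]).dichotomy with h' | h' <;>
    simp [stepsOfFn, fnOfSteps, DyckStep.ofBool, List.getElem?_eq_getElem hj, h']

lemma card_filter_fnOfSteps {L : ℕ} {l : List DyckStep} (hl : l.length = L) (b : Bool)
    (P : ℕ → Prop) [DecidablePred P] :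
    #{j : Fin L | fnOfSteps L l j = b ∧ P j} =
      #{j ∈ range L | l[j]? = some (ofBool b) ∧ P j} := by
  subst hl
  rw [← card_map Fin.valEmbedding]
  congr 1
  ext j
  simp only [mem_map, mem_filter, mem_univ, true_and, Fin.valEmbedding_apply, mem_range]
  constructor
  · rintro ⟨j, ⟨hjb, hjP⟩, rfl⟩
    refine ⟨j.2, ?_, hjP⟩
    simp only [fnOfSteps, List.getElem?_eq_getElem j.2] at hjb ⊢
    rcases (l[(j : ℕ)]).dichotomy with h' | h' <;> cases b <;> simp_all [DyckStep.ofBool]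
  · rintro ⟨hjL, hjb, hjP⟩
    refine ⟨⟨j, hjL⟩, ⟨?_, hjP⟩, rfl⟩
    cases b <;> simp_all [fnOfSteps, DyckStep.ofBool]

lemma card_filter_lt_fnOfSteps {L : ℕ} {l : List DyckStep} (hl : l.length = L) (n : ℕ)
    (b : Bool) : #{j : Fin L | (j : ℕ) < n ∧ fnOfSteps L l j = b} =
      (l.take n).count (ofBool b) := by
  rw [filter_congr fun j _ => and_comm, card_filter_fnOfSteps hl b (· < n),
    List.count_take_eq_card_filter]
  congr 1
  ext j
  simp only [mem_filter, mem_range]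
  constructor
  · rintro ⟨-, hj, hjn⟩
    exact ⟨hjn, hj⟩
  · rintro ⟨hjn, hj⟩
    exact ⟨hl ▸ (List.getElem?_eq_some_iff.1 hj).1, hj, hjn⟩

lemma isDyck_iff_stepsOfFn {k : ℕ} (w : Fin (2 * k) → Bool) :
    isDyck k w ↔ (stepsOfFn w).count U = k ∧
      ∀ n, ((stepsOfFn w).take n).count D ≤ ((stepsOfFn w).take n).count U := by
  have hl : (stepsOfFn w).length = 2 * k := by simp [stepsOfFn]
  have hcard (n : ℕ) (b : Bool) := card_filter_lt_fnOfSteps hl n b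
  rw [fnOfSteps_stepsOfFn] at hcard
  have htotal : #{j | w j = true} = (stepsOfFn w).count U := by
    simpa [List.take_of_length_le hl.le] using hcard (2 * k) true
  simp only [isDyck, prefixCond, mem_range, hcard, htotal]
  refine and_congr_right fun _ => ⟨fun h n => ?_, fun h n _ => h n⟩
  rcases le_or_gt n (2 * k) with hn | hn
  · exact h n (by omega)
  · simpa [List.take_of_length_le (hl.le.trans hn.le), List.take_of_length_le hl.le]
      using h (2 * k) (by omega)

def dyckWords (k : ℕ) : Finset DyckWord :=
  (univ : Finset {p : DyckWord // p.semilength = k}).map (Function.Embedding.subtype _)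

@[simp] lemma mem_dyckWords {k : ℕ} {p : DyckWord} : p ∈ dyckWords k ↔ p.semilength = k := by
  simp [dyckWords]

namespace DyckWord

lemma length_toList (p : DyckWord) : p.toList.length = 2 * p.semilength :=
  p.two_mul_semilength_eq_length.symm

def ofFn {k : ℕ} (w : Fin (2 * k) → Bool) (hw : isDyck k w) : DyckWord where
  toList := stepsOfFn w
  count_U_eq_count_D := by
    have := (stepsOfFn w).count_U_add_count_D
    have := ((isDyck_iff_stepsOfFn w).1 hw).1
    simp only [stepsOfFn, List.length_ofFn] at *
    omega
  count_D_le_count_U := ((isDyck_iff_stepsOfFn w).1 hw).2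

lemma semilength_ofFn {k : ℕ} (w : Fin (2 * k) → Bool) (hw : isDyck k w) :
    (ofFn w hw).semilength = k :=
  ((isDyck_iff_stepsOfFn w).1 hw).1

end DyckWord

lemma isDyck_fnOfSteps {k : ℕ} (p : DyckWord) (hk : p.semilength = k) :
    isDyck k (fnOfSteps (2 * k) p.toList) := by
  rw [isDyck_iff_stepsOfFn, stepsOfFn_fnOfSteps (by rw [p.length_toList, hk])]
  exact ⟨hk, p.count_D_le_count_U⟩

lemma sum_filter_isDyck {M : Type*} [AddCommMonoid M] (k : ℕ) (f : (Fin (2 * k) → Bool) → M) :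
    ∑ w ∈ univ.filter (fun w => isDyck k w), f w =
      ∑ p ∈ dyckWords k, f (fnOfSteps (2 * k) p.toList) := by
  refine sum_bij' (fun w hw => DyckWord.ofFn w (mem_filter.1 hw).2)
    (fun p _ => fnOfSteps (2 * k) p.toList) (fun w hw => ?_) (fun p hp => ?_)
    (fun w _ => fnOfSteps_stepsOfFn w) (fun p hp => ?_) (fun w _ => ?_)
  · simp [DyckWord.semilength_ofFn]
  · simpa using isDyck_fnOfSteps p (mem_dyckWords.1 hp)
  · ext1
    exact stepsOfFn_fnOfSteps (by rw [p.length_toList, mem_dyckWords.1 hp])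
  · simp only [DyckWord.ofFn, fnOfSteps_stepsOfFn]

/-! ### Area and returns -/

namespace DyckWord

def returns (p : DyckWord) : ℕ :=
  #{n ∈ Icc 1 p.toList.length | (p.toList.take n).count U = (p.toList.take n).count D}

def downsBefore (p : DyckWord) (i : ℕ) : ℕ :=
  #{j ∈ range p.toList.length | p.toList[j]? = some D ∧ (p.toList.take j).count U < i}

def area (p : DyckWord) : ℕ :=
  ∑ i ∈ Icc 1 p.semilength, (i - 1 - p.downsBefore i)

end DyckWord

lemma retCount_fnOfSteps {k : ℕ} (p : DyckWord) (hk : p.semilength = k) :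
    retCount k (fnOfSteps (2 * k) p.toList) = p.returns := by
  have hl : p.toList.length = 2 * k := by rw [p.length_toList, hk]
  simp only [retCount, DyckWord.returns, card_filter_lt_fnOfSteps hl, DyckStep.ofBool_true,
    DyckStep.ofBool_false, hl]

lemma area_fnOfSteps {k : ℕ} (p : DyckWord) (hk : p.semilength = k) :
    area k (fnOfSteps (2 * k) p.toList) = p.area := by
  have hl : p.toList.length = 2 * k := by rw [p.length_toList, hk]
  simp only [area, DyckWord.area, dCount, card_filter_lt_fnOfSteps hl, DyckStep.ofBool_true,
    hk]
  refine sum_congr rfl fun i _ => ?_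
  rw [DyckWord.downsBefore, hl]
  congr 1
  convert card_filter_fnOfSteps hl false (fun j => (p.toList.take j).count U < i) using 2
  rfl

def upDownPairs (l : List DyckStep) : ℕ :=
  ∑ j ∈ range l.length, if l[j]? = some D then (l.take j).count U else 0

lemma sum_range_ite_getElem?_eq_count (l : List DyckStep) (x : DyckStep) :
    (∑ j ∈ range l.length, if l[j]? = some x then 1 else 0) = l.count x := by
  rw [← card_filter, ← List.count_take_eq_card_filter, List.take_length]

lemma upDownPairs_append (l₁ l₂ : List DyckStep) :
    upDownPairs (l₁ ++ l₂) =
      upDownPairs l₁ + upDownPairs l₂ + l₁.count U * l₂.count D := by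
  rw [upDownPairs, List.length_append, sum_range_add, add_assoc]
  congr 1
  · refine sum_congr rfl fun j hj => ?_
    have hj := mem_range.1 hj
    rw [List.getElem?_append_left hj, List.take_append_of_le_length hj.le]
  · rw [← sum_range_ite_getElem?_eq_count l₂ D, mul_sum, upDownPairs, ← sum_add_distrib]
    refine sum_congr rfl fun j _ => ?_
    rw [List.getElem?_append_right (by omega), Nat.add_sub_cancel_left,
      List.take_length_add_append, List.count_append]
    split_ifs <;> ring

lemma sum_range_add_id (a b : ℕ) :
    ∑ i ∈ range (a + b), i = ∑ i ∈ range a, i + ∑ i ∈ range b, i + a * b := by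
  rw [sum_range_add, sum_add_distrib, sum_const, card_range, smul_eq_mul]
  ring

namespace DyckWord

variable (p q : DyckWord)

lemma count_U_toList : p.toList.count U = p.semilength := rfl

lemma count_D_toList : p.toList.count D = p.semilength := p.semilength_eq_count_D.symm

lemma downsBefore_le (i : ℕ) : p.downsBefore i ≤ i - 1 := by
  have hstep : ∀ j, p.toList[j]? = some D →
      (p.toList.take (j + 1)).count D = (p.toList.take j).count D + 1 ∧
        (p.toList.take (j + 1)).count U = (p.toList.take j).count U := fun j hj => by
    simp [List.count_take_succ, hj]
  have hlt : ∀ j₁ j₂, p.toList[j₁]? = some D → j₁ < j₂ →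
      (p.toList.take j₁).count D < (p.toList.take j₂).count D := fun j₁ j₂ hj h => by
    have := List.count_take_mono p.toList D (show j₁ + 1 ≤ j₂ from h)
    have := hstep j₁ hj
    omega
  calc p.downsBefore i ≤ #(range (i - 1)) := by
        refine card_le_card_of_injOn (fun j => (p.toList.take j).count D) (fun j hj => ?_)
          (fun j₁ hj₁ j₂ hj₂ heq => ?_)
        · simp only [coe_filter, mem_range, Set.mem_ofPred_eq, coe_range,
            Set.mem_Iio] at hj ⊢
          have := p.count_D_le_count_U (j + 1)
          have := hstep j hj.2.1
          omega
        · simp only [coe_filter, mem_range, Set.mem_ofPred_eq] at hj₁ hj₂ heq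
          by_contra hne
          rcases Nat.lt_or_gt_of_ne hne with h | h
          · exact (hlt _ _ hj₁.2.1 h).ne heq
          · exact (hlt _ _ hj₂.2.1 h).ne' heq
    _ = i - 1 := card_range _

/-- Double counting: `Σ_i d_i` counts the pairs (D, U) with the D first, and each of the
`semilength` D's lies in `semilength` pairs of either kind. -/
lemma sum_downsBefore_add_upDownPairs :
    ∑ i ∈ Icc 1 p.semilength, p.downsBefore i + upDownPairs p.toList =
      p.semilength * p.semilength := by
  have hle : ∀ j, (p.toList.take j).count U ≤ p.semilength :=
    fun j => (List.take_sublist j p.toList).count_le U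
  have hcard : ∀ j, #{i ∈ Icc 1 p.semilength | (p.toList.take j).count U < i} =
      p.semilength - (p.toList.take j).count U := by
    intro j
    rw [show {i ∈ Icc 1 p.semilength | (p.toList.take j).count U < i} =
      Icc ((p.toList.take j).count U + 1) p.semilength by
      ext; simp only [mem_filter, mem_Icc]; omega, Nat.card_Icc]
    omega
  have hsum : ∑ i ∈ Icc 1 p.semilength, p.downsBefore i =
      ∑ j ∈ range p.toList.length,
        if p.toList[j]? = some D then p.semilength - (p.toList.take j).count U else 0 := by
    simp only [downsBefore, card_filter]
    rw [sum_comm]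
    refine sum_congr rfl fun j _ => ?_
    split_ifs with h
    · simp only [h, true_and]
      rw [← card_filter, hcard]
    · simp [h]
  rw [hsum, upDownPairs, ← sum_add_distrib]
  calc _ = ∑ j ∈ range p.toList.length, if p.toList[j]? = some D then p.semilength else 0 := by
        refine sum_congr rfl fun j _ => ?_
        split_ifs
        · have := hle j
          omega
        · rfl
    _ = p.semilength * p.toList.count D := by
        simp only [← sum_range_ite_getElem?_eq_count, mul_sum, mul_boole]
    _ = _ := by rw [count_D_toList]

lemma area_add_mul_self :
    p.area + p.semilength * p.semilength =
      ∑ i ∈ range p.semilength, i + upDownPairs p.toList := by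
  have hsub : p.area + ∑ i ∈ Icc 1 p.semilength, p.downsBefore i =
      ∑ i ∈ range p.semilength, i := by
    rw [area, ← sum_add_distrib, range_eq_Ico, ← Ico_add_one_right_eq_Icc,
      show ∑ i ∈ Ico 0 p.semilength, i = ∑ i ∈ Ico 0 p.semilength, (i + 1 - 1) by simp,
      sum_Ico_add' (fun i => i - 1)]
    refine sum_congr rfl fun i _ => ?_
    have := p.downsBefore_le i
    omega
  have := p.sum_downsBefore_add_upDownPairs
  omega

lemma toList_add : (p + q).toList = p.toList ++ q.toList := rfl

lemma toList_nest : p.nest.toList = [U] ++ p.toList ++ [D] := rfl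

lemma area_add : (p + q).area = p.area + q.area := by
  have h := (p + q).area_add_mul_self
  rw [semilength_add, toList_add, upDownPairs_append, sum_range_add_id, count_U_toList,
    count_D_toList] at h
  have hp := p.area_add_mul_self
  have hq := q.area_add_mul_self
  linarith

lemma area_nest : p.nest.area = p.area + p.semilength := by
  have h := p.nest.area_add_mul_self
  rw [semilength_nest, toList_nest, upDownPairs_append, upDownPairs_append,
    sum_range_add_id] at h
  have hp := p.area_add_mul_self
  simp only [show upDownPairs [U] = 0 by simp [upDownPairs],
    show upDownPairs [D] = 0 by simp [upDownPairs], List.count_append, count_U_toList,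
    count_D_toList, List.count_singleton_self, range_one, sum_singleton, add_zero, mul_one,
    zero_add, one_mul] at h
  linarith

lemma returns_add : (p + q).returns = p.returns + q.returns := by
  have hIoc (n : ℕ) : Icc 1 n = Ioc 0 n := by
    ext
    simp only [mem_Icc, mem_Ioc]
    omega
  simp only [returns, card_filter, hIoc, toList_add, List.length_append]
  rw [← sum_Ioc_consecutive _ (Nat.zero_le p.toList.length) (Nat.le_add_right _ _)]
  congr 1
  · refine sum_congr rfl fun n hn => ?_
    rw [List.take_append_of_le_length (mem_Ioc.1 hn).2]
  · rw [show Ioc p.toList.length (p.toList.length + q.toList.length) =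
        (Ioc 0 q.toList.length).map (addLeftEmbedding p.toList.length) by
      rw [map_add_left_Ioc, add_zero], sum_map]
    refine sum_congr rfl fun n _ => ?_
    simp only [addLeftEmbedding_apply, List.take_length_add_append, List.count_append,
      p.count_U_eq_count_D, Nat.add_left_cancel_iff]

lemma returns_nest : p.nest.returns = 1 := by
  rw [returns, card_eq_one]
  refine ⟨p.nest.toList.length, ?_⟩
  ext n
  simp only [mem_filter, mem_Icc, mem_singleton]
  constructor
  · rintro ⟨⟨h1, h2⟩, hbal⟩
    by_contra hne
    obtain ⟨i, rfl⟩ : ∃ i, n = i + 1 := ⟨n - 1, by omega⟩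
    have hi : i < p.nest.firstReturn := by
      rw [firstReturn_nest, length_toList]
      rw [length_toList, semilength_nest] at h2 hne
      omega
    exact (count_D_lt_count_U_of_lt_firstReturn hi).ne' hbal
  · rintro rfl
    refine ⟨⟨by simp [toList_nest], le_rfl⟩, ?_⟩
    rw [List.take_length, p.nest.count_U_eq_count_D]

end DyckWord

/-! ### First-return decomposition -/

lemma dyckWords_zero : dyckWords 0 = {0} := by
  ext p
  simp only [mem_dyckWords, mem_singleton]
  refine ⟨fun h => ?_, fun h => h ▸ DyckWord.semilength_zero⟩
  rw [← DyckWord.toList_eq_nil, ← List.length_eq_zero_iff, p.length_toList, h]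

lemma sum_dyckWords_succ {M : Type*} [AddCommMonoid M] (f : DyckWord → M) (m : ℕ) :
    ∑ r ∈ dyckWords (m + 1), f r =
      ∑ x ∈ antidiagonal m, ∑ p ∈ dyckWords x.1, ∑ q ∈ dyckWords x.2,
        f (p.nest + q) := by
  simp_rw [← sum_product' (f := fun (p q : DyckWord) => f (p.nest + q))]
  rw [sum_sigma']
  have hne : ∀ r ∈ dyckWords (m + 1), r ≠ 0 := by
    rintro r hr rfl
    simp at hr
  refine (sum_bij' (fun x _ => x.2.1.nest + x.2.2)
    (fun r _ => ⟨(r.insidePart.semilength, r.outsidePart.semilength),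
      (r.insidePart, r.outsidePart)⟩) (fun x hx => ?_) (fun r hr => ?_) (fun x hx => ?_)
    (fun r hr => DyckWord.nest_insidePart_add_outsidePart (hne r hr)) (fun _ _ => rfl)).symm
  · obtain ⟨⟨a, b⟩, p, q⟩ := x
    simp only [mem_sigma, HasAntidiagonal.mem_antidiagonal, mem_product, mem_dyckWords] at hx ⊢
    simp only [DyckWord.semilength_add, DyckWord.semilength_nest]
    omega
  · simp only [mem_sigma, HasAntidiagonal.mem_antidiagonal, mem_product, mem_dyckWords, and_true]
    have := DyckWord.semilength_insidePart_add_semilength_outsidePart_add_one (hne r hr)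
    rw [mem_dyckWords.1 hr] at this
    omega
  · obtain ⟨⟨a, b⟩, p, q⟩ := x
    simp only [mem_sigma, HasAntidiagonal.mem_antidiagonal, mem_product, mem_dyckWords] at hx
    obtain ⟨-, rfl, rfl⟩ := hx
    simp [DyckWord.insidePart_add, DyckWord.outsidePart_add]

section DyckPoly

variable {R : Type*} [CommSemiring R]

def dyckPoly (q t : R) (k : ℕ) : R :=
  ∑ p ∈ dyckWords k, q ^ p.area * t ^ p.returns

lemma dyckPoly_zero (q t : R) : dyckPoly q t 0 = 1 := by
  simp [dyckPoly, dyckWords_zero, DyckWord.area, DyckWord.returns,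
    show (0 : DyckWord).toList = [] from rfl]

lemma dyckPoly_succ (q t : R) (m : ℕ) :
    dyckPoly q t (m + 1) =
      t * ∑ x ∈ antidiagonal m, q ^ x.1 * dyckPoly q 1 x.1 * dyckPoly q t x.2 := by
  rw [dyckPoly, sum_dyckWords_succ, mul_sum]
  refine sum_congr rfl fun x _ => ?_
  rw [dyckPoly, dyckPoly, mul_assoc (q ^ x.1), sum_mul_sum]
  simp only [mul_sum, one_pow, mul_one]
  refine sum_congr rfl fun p hp => sum_congr rfl fun r _ => ?_
  rw [DyckWord.area_add, DyckWord.area_nest, DyckWord.returns_add, DyckWord.returns_nest,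
    mem_dyckWords.1 hp]
  ring

open PowerSeries in
lemma mk_dyckPoly (q t : R) :
    PowerSeries.mk (dyckPoly q t) =
      1 + C t * X *
        (rescale q (PowerSeries.mk (dyckPoly q 1)) * PowerSeries.mk (dyckPoly q t)) := by
  ext (_ | n)
  · simp [dyckPoly_zero]
  · rw [coeff_mk, dyckPoly_succ, map_add, mul_assoc, coeff_C_mul, coeff_succ_X_mul, coeff_mul,
      coeff_one, if_neg n.succ_ne_zero, zero_add]
    simp only [coeff_rescale, coeff_mk]

end DyckPoly

/-! ### Generating functions -/

namespace PowerSeries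

variable {R : Type*}

lemma rescale_C [CommSemiring R] (a c : R) : rescale c (C a) = C a := by
  ext (_ | n) <;> simp [coeff_C]

lemma eq_zero_of_forall_eq_X_mul [CommSemiring R] {ι : Type*} {f g h : ι → R⟦X⟧}
    {σ : ι → ι}
    (hf : ∀ i, f i = X * (g i * f i + h i * f (σ i))) (i : ι) : f i = 0 := by
  have hdvd : ∀ n i, X ^ n ∣ f i := by
    intro n
    induction n with
    | zero => simp
    | succ n ih =>
      intro i
      rw [hf i, pow_succ']
      exact mul_dvd_mul_left X (dvd_add (Dvd.dvd.mul_left (ih i) _) (Dvd.dvd.mul_left (ih _) _))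
  ext n
  simpa using X_pow_dvd_iff.1 (hdvd (n + 1) i) n n.lt_succ_self

end PowerSeries

open PowerSeries

lemma pv_ne_zero : pv ≠ 0 := by
  simp [pv, RatFunc.X_ne_zero]

lemma yv_ne_zero : yv ≠ 0 := RatFunc.X_ne_zero

lemma one_sub_pv_pow_ne_zero {k : ℕ} (hk : 0 < k) : 1 - pv ^ k ≠ 0 := by
  intro h
  have hX : (RatFunc.X : RatFunc ℚ) ^ k = 1 := by
    apply (RatFunc.C : RatFunc ℚ →+* K2).injective
    rw [map_pow, map_one, ← pv]
    linear_combination -h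
  exact RatFunc.transcendental_X (K := ℚ) ⟨Polynomial.X ^ k - Polynomial.C 1,
    Polynomial.X_pow_sub_C_ne_zero hk 1, by simp [hX]⟩

lemma coeff_Aser_succ (n : ℕ) :
    coeff (n + 1) Aser * (1 - pv ^ (n + 1)) = -(pv ^ (2 * n + 1) * yv ^ 2 * coeff n Aser) := by
  have hprod : ∏ i ∈ Finset.range n, (1 - pv ^ (i + 1)) ≠ 0 :=
    Finset.prod_ne_zero_iff.2 fun i _ => one_sub_pv_pow_ne_zero i.succ_pos
  have hn := one_sub_pv_pow_ne_zero n.succ_pos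
  simp only [Aser, coeff_mk, Finset.prod_range_succ]
  field_simp
  ring

lemma Aser_eq_rescale_sub :
    Aser = rescale pv Aser - C (pv * yv ^ 2) * X * rescale (pv ^ 2) Aser := by
  ext (_ | n)
  · simp only [map_sub, coeff_rescale, mul_assoc, coeff_C_mul, coeff_zero_X_mul]
    ring
  · rw [map_sub, mul_assoc, coeff_C_mul, coeff_succ_X_mul, coeff_rescale, coeff_rescale]
    linear_combination coeff_Aser_succ n

lemma rescale_Aser_mul_rescale_mk_dyckPoly (c : K2) :
    rescale c Aser * rescale (c * (pv * yv ^ 2)) (PowerSeries.mk (dyckPoly pv 1)) =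
      rescale (c * pv) Aser := by
  set P := PowerSeries.mk (dyckPoly pv (1 : K2))
  -- The identity at `c` involves the one at `c * pv`, hence the induction over all `c` at once.
  refine sub_eq_zero.1 (eq_zero_of_forall_eq_X_mul
    (f := fun c => rescale c Aser * rescale (c * (pv * yv ^ 2)) P - rescale (c * pv) Aser)
    (g := fun c => C (c * (pv * yv ^ 2)) * rescale (c * pv * (pv * yv ^ 2)) P)
    (h := fun c => C (c * (pv * yv ^ 2))) (σ := fun c => c * pv) (fun c => ?_) c)
  have hA := congrArg (rescale c) Aser_eq_rescale_sub
  have hP := congrArg (rescale (c * (pv * yv ^ 2))) (mk_dyckPoly pv (1 : K2))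
  simp only [map_sub, map_add, map_mul, map_pow, map_one, rescale_rescale, rescale_X, rescale_C]
    at hA hP ⊢
  -- normalise the scaling factors so that equal rescalings become equal atoms
  ring_nf at hA hP ⊢
  linear_combination rescale c Aser * hP + hA

noncomputable def areaSeries : K2⟦X⟧ := rescale (pv * yv ^ 2) (PowerSeries.mk (dyckPoly pv 1))

noncomputable def returnSeries : K2⟦X⟧ :=
  rescale (yv ^ 2) (PowerSeries.mk (dyckPoly pv (pv / yv)))

lemma Aser_mul_areaSeries : Aser * areaSeries = rescale pv Aser := by
  simpa [areaSeries] using rescale_Aser_mul_rescale_mk_dyckPoly 1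

lemma returnSeries_eq_one_add_mul_areaSeries :
    returnSeries = 1 + C (pv * yv) * X * (areaSeries * returnSeries) := by
  have h := congrArg (rescale (yv ^ 2)) (mk_dyckPoly pv (pv / yv))
  simp only [map_add, map_mul, map_one, rescale_rescale, rescale_X, rescale_C] at h
  rw [show C (pv * yv) = C (pv / yv) * C (yv ^ 2) by
    rw [← map_mul]; congr 1; field_simp [yv_ne_zero]]
  rw [returnSeries, areaSeries]
  linear_combination h

lemma pv_mul_yv_pow_mul_Dcoeff (n : ℕ) :
    (pv * yv) ^ (n + 1) * Dcoeff n = (yv ^ 2) ^ (n + 1) * dyckPoly pv (pv / yv) (n + 1) := by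
  rw [Dcoeff, sum_filter_isDyck, dyckPoly, mul_sum, mul_sum]
  refine sum_congr rfl fun p hp => ?_
  rw [retCount_fnOfSteps p (mem_dyckWords.1 hp), area_fnOfSteps p (mem_dyckWords.1 hp),
    show (p.returns : ℤ) + p.area = ((p.returns + p.area : ℕ) : ℤ) by push_cast; rfl,
    show (n : ℤ) + 1 = ((n + 1 : ℕ) : ℤ) by push_cast; rfl,
    zpow_sub₀ pv_ne_zero, zpow_sub₀ yv_ne_zero]
  simp only [zpow_natCast, div_pow]
  have hp := pv_ne_zero
  have hy := yv_ne_zero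
  field_simp
  ring

lemma returnSeries_eq_one_add_mul_mk_Dcoeff :
    returnSeries = 1 + C (pv * yv) * X * PowerSeries.mk (fun n => (pv * yv) ^ n * Dcoeff n) := by
  ext (_ | n)
  · simp [returnSeries, dyckPoly_zero]
  · rw [map_add, mul_assoc, coeff_C_mul, coeff_succ_X_mul, returnSeries, coeff_rescale, coeff_mk,
      coeff_mk, coeff_one, if_neg n.succ_ne_zero, zero_add, ← mul_assoc, ← pow_succ',
      pv_mul_yv_pow_mul_Dcoeff]

/-- `B(x) · Σ_{n≥0} (p·y)^n (Σ_{μ ∈ D_{n+1}} p^{D(μ)} y^{n+1-ret(μ)}) x^n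
= A(p·x)` where `D(μ) = ret(μ) + Area(μ) - (n+1)`. -/
theorem stmt_13 :
    Bser * PowerSeries.mk (fun n => (pv * yv) ^ n * Dcoeff n) =
      PowerSeries.rescale pv Aser := by
  have hX : C (pv * yv) * X ≠ (0 : K2⟦X⟧) :=
    mul_ne_zero (by simp [pv_ne_zero, yv_ne_zero]) X_ne_zero
  have hΦ : PowerSeries.mk (fun n => (pv * yv) ^ n * Dcoeff n) = areaSeries * returnSeries :=
    mul_left_cancel₀ hX (by
      linear_combination returnSeries_eq_one_add_mul_areaSeries -
        returnSeries_eq_one_add_mul_mk_Dcoeff)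
  rw [hΦ, Bser]
  linear_combination returnSeries * Aser_mul_areaSeries +
    rescale pv Aser * returnSeries_eq_one_add_mul_areaSeries
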